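/- Let u = a₁⋯a_ℓ be a rich word over a finite alphabet A with arch factorization s₁⋯s_m·r. Then there exist a letter a ∈ A and a position d = min{i | a_i = a} (the position of the first occurrence of a in u) with 0 < d ≤ |s₁| such that ζ(u) = ι(u^{∼d}), where u^{∼d} is the d-th conjugate of u. -/

import Mathlib

/-!
A conjugate `u^{∼e}` realising `ζ(u)` can be moved towards the front of `u` until the letter
`u[e-1]` it ends with is a first occurrence. Write `u^{∼e} = y x` with `x = u(0,e)` and suppose
the last letter `c` of `x` also occurs earlier in `x`. In the arch factorization of `y x`, the
arch containing the first letter of `x` cannot be the last factor ending at the end of the word: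
that arch's last letter is new in it, while `c` is not. Cutting `y x` at the end of that arch,
strictly inside `x`, gives a conjugate `u^{∼e'}`, `0 < e' < e`, that is still `ζ(u)`-universal.
A first occurrence `d = idxOf a + 1` of a letter lies within the first arch of `u`.
-/

/-- The subword universality index `ι(u)`: the largest `k` such that every word of
length `k` over the alphabet `A` is a subword (subsequence) of `u`. -/
noncomputable def univIndex {A : Type*} (u : List A) : ℕ :=
  sSup {k : ℕ | ∀ w : List A, w.length = k → w.Sublist u}

/-- The circular subword universality index `ζ(u)`: the maximum of `ι(u')` over all
conjugates `u'` of `u` (equivalently, over all rotations of `u`). -/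
noncomputable def circIndex {A : Type*} (u : List A) : ℕ :=
  (Finset.range (u.length + 1)).sup fun i => univIndex (u.drop i ++ u.take i)

/-- The length `λ₁ = |s₁|` of the first arch of a (rich) word `u`:
the least `j` such that the prefix `u(0,j)` contains every letter of `A`. -/
noncomputable def firstArchLen {A : Type*} (u : List A) : ℕ :=
  sInf {j : ℕ | ∀ a : A, a ∈ u.take j}


section Universality

variable {A : Type*}

def IsUniversal (k : ℕ) (v : List A) : Prop :=
  ∀ w : List A, w.length = k → w.Sublist v

theorem isUniversal_zero (v : List A) : IsUniversal 0 v := by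
  intro w hw
  rw [List.length_eq_zero_iff.mp hw]
  exact List.nil_sublist v

theorem isUniversal_one_of_forall_mem {v : List A} (hv : ∀ a, a ∈ v) : IsUniversal 1 v := by
  intro w hw
  obtain ⟨a, rfl⟩ := List.length_eq_one_iff.mp hw
  exact List.singleton_sublist.mpr (hv a)

theorem IsUniversal.forall_mem {k : ℕ} {v : List A} (h : IsUniversal (k + 1) v) (a : A) :
    a ∈ v :=
  (h (List.replicate (k + 1) a) List.length_replicate).subset (by simp)

theorem IsUniversal.append {k l : ℕ} {x y : List A} (hx : IsUniversal k x)
    (hy : IsUniversal l y) : IsUniversal (k + l) (x ++ y) := by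
  intro w hw
  rw [← List.take_append_drop k w]
  exact (hx _ (by simp [hw])).append (hy _ (by simp [hw]))

theorem List.Sublist.of_cons_of_notMem {b : A} {w y z : List A} (hb : b ∉ y)
    (h : (b :: w).Sublist (y ++ b :: z)) : w.Sublist z := by
  obtain ⟨l₁, l₂, hw, h₁, h₂⟩ := List.sublist_append_iff.mp h
  cases l₁ with
  | nil =>
    rw [List.nil_append] at hw
    exact List.cons_sublist_cons.mp (hw ▸ h₂)
  | cons x l₁ =>
    obtain ⟨rfl, -⟩ := List.cons_eq_cons.mp hw
    exact absurd (h₁.subset List.mem_cons_self) hb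

theorem exists_arch_prefix [Nonempty A] {v : List A} (hv : ∀ a, a ∈ v) :
    ∃ s b v', v = s ++ [b] ++ v' ∧ b ∉ s ∧ ∀ a, a ∈ s ++ [b] := by
  induction v using List.reverseRecOn with
  | nil => exact absurd (hv (Classical.arbitrary A)) List.not_mem_nil
  | append_singleton w x ih =>
    by_cases hw : ∀ a, a ∈ w
    · obtain ⟨s, b, v', rfl, hb, hs⟩ := ih hw
      exact ⟨s, b, v' ++ [x], by simp, hb, hs⟩
    · obtain ⟨b, hb⟩ := not_forall.mp hw
      obtain rfl : b = x := by simpa [hb] using hv b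
      exact ⟨w, b, [], by simp, hb, hv⟩

theorem IsUniversal.exists_arch_prefix [Nonempty A] {m : ℕ} {v : List A}
    (h : IsUniversal (m + 1) v) :
    ∃ s b v', v = s ++ [b] ++ v' ∧ b ∉ s ∧ IsUniversal 1 (s ++ [b]) ∧ IsUniversal m v' := by
  obtain ⟨s, b, v', rfl, hb, hs⟩ := _root_.exists_arch_prefix h.forall_mem
  refine ⟨s, b, v', rfl, hb, isUniversal_one_of_forall_mem hs, fun w hw => ?_⟩
  have := h (b :: w) (by simp [hw])
  rw [List.append_assoc, List.singleton_append] at this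
  exact this.of_cons_of_notMem hb

theorem IsUniversal.exists_split [Nonempty A] {m : ℕ} {y x : List A} {c : A}
    (h : IsUniversal m (y ++ (x ++ [c]))) (hc : c ∈ x) :
    ∃ x₁ x₂ k l, x ++ [c] = x₁ ++ x₂ ∧ x₁ ≠ [] ∧ x₂ ≠ [] ∧ k + l = m ∧
      IsUniversal k (y ++ x₁) ∧ IsUniversal l x₂ := by
  induction m generalizing y with
  | zero =>
    obtain ⟨d, x', rfl⟩ := List.exists_cons_of_ne_nil (List.ne_nil_of_mem hc)
    exact ⟨[d], x' ++ [c], 0, 0, rfl, by simp, by simp, rfl, isUniversal_zero _,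
      isUniversal_zero _⟩
  | succ m ih =>
    obtain ⟨s, b, v', hv, hb, hs, hv'⟩ := h.exists_arch_prefix
    obtain ⟨y', rfl, rfl⟩ | ⟨x₁, hsx, hx, hx₁⟩ :
        (∃ y', y = s ++ [b] ++ y' ∧ v' = y' ++ (x ++ [c])) ∨
          ∃ x₁, s ++ [b] = y ++ x₁ ∧ x ++ [c] = x₁ ++ v' ∧ x₁ ≠ [] := by
      rcases List.append_eq_append_iff.mp hv with ⟨_ | ⟨d, x₁⟩, hsx, hx⟩ | h
      · exact Or.inl ⟨[], by simpa using hsx.symm, by simpa using hx.symm⟩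
      · exact Or.inr ⟨d :: x₁, hsx, hx, by simp⟩
      · exact Or.inl h
    · obtain ⟨x₁, x₂, k, l, hx, hx₁, hx₂, rfl, hk, hl⟩ := ih hv'
      refine ⟨x₁, x₂, 1 + k, l, hx, hx₁, hx₂, by omega, ?_, hl⟩
      simpa only [List.append_assoc] using hs.append hk
    · refine ⟨x₁, v', 1, m, hx, hx₁, ?_, by omega, hsx ▸ hs, hv'⟩
      -- the arch `s ++ [b]` would end with the repeated letter `c`
      rintro rfl
      rw [List.append_nil] at hx
      rw [← hx, ← List.append_assoc, List.append_singleton_inj] at hsx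
      obtain ⟨rfl, rfl⟩ := hsx
      exact hb (List.mem_append_right y hc)

end Universality

section Conjugates

variable {A : Type*} [Nonempty A]

theorem exists_lt_isUniversal_conj {m e : ℕ} {u x : List A} {c : A}
    (h : IsUniversal m (u.drop e ++ u.take e)) (hx : u.take e = x ++ [c]) (hc : c ∈ x) :
    ∃ e', 0 < e' ∧ e' < e ∧ IsUniversal m (u.drop e' ++ u.take e') := by
  rw [hx] at h
  obtain ⟨x₁, x₂, k, l, hsplit, hx₁, hx₂, rfl, hk, hl⟩ := h.exists_split hc
  have hu : u = x₁ ++ (x₂ ++ u.drop e) := by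
    rw [← List.append_assoc, ← hsplit, ← hx, List.take_append_drop]
  have hlen : x₁.length + x₂.length ≤ e := by
    rw [← List.length_append, ← hsplit, ← hx]
    exact List.length_take_le e u
  refine ⟨x₁.length, List.length_pos_iff.mpr hx₁, ?_, ?_⟩
  · have := List.length_pos_iff.mpr hx₂
    omega
  · rw [hu, List.drop_left, List.take_left, add_comm]
    simpa only [List.append_assoc] using hl.append hk

theorem exists_isUniversal_conj_idxOf [DecidableEq A] {m e : ℕ} {u : List A} (he₀ : 0 < e)
    (he : e ≤ u.length) (h : IsUniversal m (u.drop e ++ u.take e)) :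
    ∃ a, IsUniversal m (u.drop (u.idxOf a + 1) ++ u.take (u.idxOf a + 1)) := by
  induction e using Nat.strong_induction_on with
  | _ e ih =>
    obtain ⟨x, c, hx⟩ : ∃ x c, u.take e = x ++ [c] := by
      rcases List.eq_nil_or_concat (u.take e) with h0 | h0
      · rcases List.take_eq_nil_iff.mp h0 with rfl | rfl
        · exact absurd he₀ (lt_irrefl 0)
        · exact absurd he (by simpa using he₀.ne')
      · simpa using h0
    by_cases hc : c ∈ x
    · obtain ⟨e', he'₀, he'e, h'⟩ := exists_lt_isUniversal_conj h hx hc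
      exact ih e' he'e he'₀ (by omega) h'
    · refine ⟨c, ?_⟩
      have hidx : u.idxOf c + 1 = e := by
        have hlen := congrArg List.length hx
        rw [List.length_take_of_le he, List.length_append, List.length_singleton] at hlen
        rw [← List.take_append_drop e u, hx, List.append_assoc, List.singleton_append,
          List.idxOf_append_of_notMem hc, List.idxOf_cons_self, add_zero, hlen]
      rwa [hidx]

end Conjugates

section Indices

variable {A : Type*}

theorem bddAbove_isUniversal [Nonempty A] (u : List A) : BddAbove {k | IsUniversal k u} := by
  refine ⟨u.length, fun k hk => ?_⟩
  simpa using (hk (List.replicate k (Classical.arbitrary A)) List.length_replicate).length_le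

theorem isUniversal_univIndex [Nonempty A] (u : List A) : IsUniversal (univIndex u) u :=
  Nat.sSup_mem ⟨0, isUniversal_zero u⟩ (bddAbove_isUniversal u)

theorem IsUniversal.le_univIndex [Nonempty A] {k : ℕ} {u : List A} (h : IsUniversal k u) :
    k ≤ univIndex u :=
  le_csSup (bddAbove_isUniversal u) h

theorem univIndex_conj_le_circIndex {u : List A} {d : ℕ} (hd : d ≤ u.length) :
    univIndex (u.drop d ++ u.take d) ≤ circIndex u :=
  Finset.le_sup (f := fun i => univIndex (u.drop i ++ u.take i))
    (Finset.mem_range.mpr (Nat.lt_succ_of_le hd))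

theorem exists_circIndex_eq_univIndex_conj {u : List A} (hu : u ≠ []) :
    ∃ e, 0 < e ∧ e ≤ u.length ∧ circIndex u = univIndex (u.drop e ++ u.take e) := by
  obtain ⟨i, hi, heq⟩ := Finset.exists_mem_eq_sup (Finset.range (u.length + 1))
    Finset.nonempty_range_add_one fun i => univIndex (u.drop i ++ u.take i)
  have hi : i ≤ u.length := Nat.lt_succ_iff.mp (Finset.mem_range.mp hi)
  rcases Nat.eq_zero_or_pos i with rfl | hi₀
  · -- the conjugates `u^{∼0}` and `u^{∼|u|}` are both `u`
    exact ⟨u.length, List.length_pos_iff.mpr hu, le_rfl, heq.trans (by simp)⟩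
  · exact ⟨i, hi₀, hi, heq⟩

theorem firstArchLen_le_length {u : List A} (hu : ∀ a, a ∈ u) : firstArchLen u ≤ u.length :=
  Nat.sInf_le (by simpa using hu)

theorem idxOf_lt_firstArchLen [DecidableEq A] {u : List A} (hu : ∀ a, a ∈ u) (a : A) :
    u.idxOf a < firstArchLen u := by
  have hmem : ∀ b, b ∈ u.take (firstArchLen u) :=
    Nat.sInf_mem (s := {j | ∀ b, b ∈ u.take j}) ⟨u.length, by simpa using hu⟩
  have hidx := List.idxOf_append_of_mem (l₂ := u.drop (firstArchLen u)) (hmem a)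
  rw [List.take_append_drop] at hidx
  rw [hidx]
  exact (List.idxOf_lt_length_of_mem (hmem a)).trans_le (List.length_take_le _ _)

end Indices

theorem circIndex_attained_after_first_occurrence_general {A : Type*} [Nonempty A]
    [DecidableEq A] (u : List A) (hrich : ∀ a : A, a ∈ u) :
    ∃ (a : A) (d : ℕ), d = u.idxOf a + 1 ∧ 0 < d ∧ d ≤ firstArchLen u ∧
      circIndex u = univIndex (u.drop d ++ u.take d) := by
  obtain ⟨e, he₀, he, heq⟩ :=
    exists_circIndex_eq_univIndex_conj (List.ne_nil_of_mem (hrich (Classical.arbitrary A)))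
  obtain ⟨a, ha⟩ := exists_isUniversal_conj_idxOf he₀ he (heq ▸ isUniversal_univIndex _)
  have hd : u.idxOf a + 1 ≤ firstArchLen u := idxOf_lt_firstArchLen hrich a
  exact ⟨a, _, rfl, Nat.succ_pos _, hd, le_antisymm (heq ▸ ha.le_univIndex)
    (univIndex_conj_le_circIndex (hd.trans (firstArchLen_le_length hrich)))⟩

/-- For a rich word `u`, the circular universality index `ζ(u)` is attained by a conjugate
`u^{∼d}` where `0 < d ≤ |s₁|` and `d` is the (1-based) position of the first occurrence of
some letter `a` in `u`, i.e. `d = min{i | aᵢ = a}`. -/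
theorem circIndex_attained_after_first_occurrence {A : Type*} [Fintype A] [Nonempty A]
    [DecidableEq A] (u : List A) (hrich : ∀ a : A, a ∈ u) :
    ∃ (a : A) (d : ℕ), d = u.idxOf a + 1 ∧ 0 < d ∧ d ≤ firstArchLen u ∧
      circIndex u = univIndex (u.drop d ++ u.take d) :=
  circIndex_attained_after_first_occurrence_general u hrich
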